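/- arXiv:2306.02672 — 5 statements merged into one kernel-verified Lean document; each statement's English description precedes it below -/
import Mathlib

section
/- For two closed balls of radius r in ℝ^d whose centres are at distance 2ru with 0 ≤ u ≤ 1, the volume of their intersection equals 2·v_{d-1}·r^d·∫₀^{arccos u} (sin θ)^d dθ, where v_{d-1} is the volume of the unit ball in ℝ^{d-1}. -/
open MeasureTheory Metric Real

/-!
The volume of `B(x, r) ∩ B(y, r)` depends only on `dist x y` (translate, then reflect), so the
centres may be taken to be `±c e₀` with `c = r u`. Slicing orthogonally to `e₀`, the slice at
height `t` is a `(d-1)`-ball of radius `√(r² - (|t| + c)²)`, so by Fubini the volume is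
`v_{d-1} ∫ (r² - (|t| + c)²)^((d-1)/2) dt = 2 v_{d-1} ∫_c^r (r² - s²)^((d-1)/2) ds`, and the
substitution `s = r cos θ` turns this into `2 v_{d-1} r^d ∫_0^{arccos u} sin^d θ dθ`.
-/

section Invariance

open scoped Pointwise

variable {E : Type*}

theorem measure_closedBall_inter_closedBall_eq_sub [NormedAddCommGroup E] [MeasurableSpace E]
    [BorelSpace E] (μ : Measure E) [μ.IsAddLeftInvariant] (x y : E) (r : ℝ) :
    μ (closedBall x r ∩ closedBall y r) = μ (closedBall 0 r ∩ closedBall (y - x) r) := by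
  have : closedBall x r ∩ closedBall y r = x +ᵥ (closedBall 0 r ∩ closedBall (y - x) r) := by
    rw [Set.vadd_set_inter, vadd_closedBall, vadd_closedBall, vadd_eq_add, vadd_eq_add, add_zero,
      add_sub_cancel]
  rw [this, measure_vadd]

theorem volume_closedBall_inter_closedBall_congr_dist [NormedAddCommGroup E]
    [InnerProductSpace ℝ E] [FiniteDimensional ℝ E] [MeasurableSpace E] [BorelSpace E]
    {x y x' y' : E} (h : dist x y = dist x' y') (r : ℝ) :
    volume (closedBall x r ∩ closedBall y r) = volume (closedBall x' r ∩ closedBall y' r) := by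
  rw [measure_closedBall_inter_closedBall_eq_sub volume x,
    measure_closedBall_inter_closedBall_eq_sub volume x']
  set G := (ℝ ∙ ((y' - x') - (y - x)))ᗮ.reflection
  have hG : G (y' - x') = y - x :=
    Submodule.reflection_sub (by rw [← dist_eq_norm, ← dist_eq_norm, dist_comm, ← h, dist_comm])
  rw [← G.measurePreserving.measure_preimage
    (measurableSet_closedBall.inter measurableSet_closedBall).nullMeasurableSet, Set.preimage_inter,
    ← hG, G.preimage_closedBall, G.preimage_closedBall, map_zero, G.symm_apply_apply]

end Invariance

theorem volume_setOf_sum_sq_le (n : ℕ) (hn : n ≠ 0) (D : ℝ) :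
    volume {z : Fin n → ℝ | ∑ j, z j ^ 2 ≤ D} =
      ENNReal.ofReal (√D ^ n) * volume (ball (0 : EuclideanSpace ℝ (Fin n)) 1) := by
  rw [← (EuclideanSpace.volume_preserving_symm_measurableEquiv_toLp (Fin n)).measure_preimage_equiv]
  rcases lt_or_ge D 0 with hD | hD
  · have : {z : Fin n → ℝ | ∑ j, z j ^ 2 ≤ D} = ∅ :=
      Set.eq_empty_of_forall_notMem fun z hz => (hD.trans_le (by positivity)).not_ge hz
    rw [this, Set.preimage_empty, measure_empty, sqrt_eq_zero_of_nonpos hD.le, zero_pow hn,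
      ENNReal.ofReal_zero, zero_mul]
  · have : (MeasurableEquiv.toLp 2 (Fin n → ℝ)).symm ⁻¹' {z | ∑ j, z j ^ 2 ≤ D} =
        closedBall 0 √D := by
      ext z
      rw [mem_closedBall_zero_iff, ← sqrt_sq (norm_nonneg z), sqrt_le_sqrt_iff hD,
        EuclideanSpace.real_norm_sq_eq]
      rfl
    rw [this, Measure.addHaar_closedBall _ _ (sqrt_nonneg D), finrank_euclideanSpace_fin]

theorem volume_setOf_sum_sq_tail_le (n : ℕ) (hn : n ≠ 0) {φ : ℝ → ℝ} (hφ : Measurable φ) :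
    volume {z : EuclideanSpace ℝ (Fin (n + 1)) | ∑ j : Fin n, z j.succ ^ 2 ≤ φ (z 0)} =
      (∫⁻ t, ENNReal.ofReal (√(φ t) ^ n)) * volume (ball (0 : EuclideanSpace ℝ (Fin n)) 1) := by
  set S : Set (ℝ × (Fin n → ℝ)) := {q | ∑ j, q.2 j ^ 2 ≤ φ q.1}
  have hS : MeasurableSet S := measurableSet_le (by fun_prop) (hφ.comp measurable_fst)
  calc volume {z : EuclideanSpace ℝ (Fin (n + 1)) | ∑ j : Fin n, z j.succ ^ 2 ≤ φ (z 0)}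
      = volume ((MeasurableEquiv.toLp 2 (Fin (n + 1) → ℝ)).symm ⁻¹'
          (MeasurableEquiv.piFinSuccAbove (fun _ => ℝ) 0 ⁻¹' S)) := rfl
    _ = volume S := by
      rw [(EuclideanSpace.volume_preserving_symm_measurableEquiv_toLp _).measure_preimage_equiv,
        (volume_preserving_piFinSuccAbove (fun _ => ℝ) 0).measure_preimage_equiv]
    _ = ∫⁻ t, volume (Prod.mk t ⁻¹' S) := by rw [Measure.volume_eq_prod, Measure.prod_apply hS]
    _ = ∫⁻ t, ENNReal.ofReal (√(φ t) ^ n) * volume (ball (0 : EuclideanSpace ℝ (Fin n)) 1) :=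
      lintegral_congr fun t => volume_setOf_sum_sq_le n hn (φ t)
    _ = _ := lintegral_mul_const _ (ENNReal.measurable_ofReal.comp (hφ.sqrt.pow_const n))

theorem integral_comp_abs_add {f : ℝ → ℝ} {c r : ℝ} (hcr : c ≤ r) (hf : ∀ s, r < s → f s = 0) :
    ∫ t, f (|t| + c) = 2 * ∫ s in c..r, f s := by
  have hvanish : ∫ t in Set.Ioi 0, f (t + c) = ∫ t in Set.Ioc 0 (r - c), f (t + c) :=
    setIntegral_eq_of_subset_of_forall_sdiff_eq_zero measurableSet_Ioi Set.Ioc_subset_Ioi_self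
      fun t ⟨ht₀, ht⟩ => hf _ (by linarith [lt_of_not_ge fun h => ht ⟨ht₀, h⟩])
  rw [integral_comp_abs (f := fun t => f (t + c)), hvanish,
    ← intervalIntegral.integral_of_le (sub_nonneg.2 hcr),
    intervalIntegral.integral_comp_add_right f c, zero_add, sub_add_cancel]

theorem dist_single_zero_le_iff {n : ℕ} (z : EuclideanSpace ℝ (Fin (n + 1))) (a : ℝ) {r : ℝ}
    (hr : 0 ≤ r) :
    dist z (EuclideanSpace.single 0 a) ≤ r ↔ (z 0 - a) ^ 2 + ∑ j : Fin n, z j.succ ^ 2 ≤ r ^ 2 := by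
  rw [← sq_le_sq₀ dist_nonneg hr, EuclideanSpace.dist_sq_eq, Fin.sum_univ_succ]
  simp [Real.dist_eq, sq_abs, Fin.succ_ne_zero]

theorem closedBall_single_inter_closedBall_single_neg {n : ℕ} {r c : ℝ} (hr : 0 ≤ r) (hc : 0 ≤ c) :
    closedBall (EuclideanSpace.single 0 c : EuclideanSpace ℝ (Fin (n + 1))) r ∩
        closedBall (EuclideanSpace.single 0 (-c)) r =
      {z | ∑ j : Fin n, z j.succ ^ 2 ≤ r ^ 2 - (|z 0| + c) ^ 2} := by
  ext z
  simp only [Set.mem_inter_iff, mem_closedBall, dist_single_zero_le_iff _ _ hr, sub_neg_eq_add,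
    Set.mem_ofPred_eq]
  rcases le_total 0 (z 0) with h | h
  · rw [abs_of_nonneg h]
    constructor
    · rintro ⟨-, h₂⟩; linarith
    · intro h'; constructor <;> nlinarith [mul_nonneg h hc]
  · rw [abs_of_nonpos h]
    constructor
    · rintro ⟨h₁, -⟩; linarith
    · intro h'; constructor <;> nlinarith [mul_nonneg (neg_nonneg.2 h) hc]

theorem volume_closedBall_single_inter_closedBall_single_neg (n : ℕ) (hn : n ≠ 0) {r c : ℝ}
    (hc : 0 ≤ c) (hcr : c ≤ r) :
    volume (closedBall (EuclideanSpace.single 0 c : EuclideanSpace ℝ (Fin (n + 1))) r ∩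
        closedBall (EuclideanSpace.single 0 (-c)) r) =
      ENNReal.ofReal (2 * ∫ s in c..r, √(r ^ 2 - s ^ 2) ^ n) *
        volume (ball (0 : EuclideanSpace ℝ (Fin n)) 1) := by
  set f : ℝ → ℝ := fun s => √(r ^ 2 - s ^ 2) ^ n
  have hf : ∀ s, r < s → f s = 0 := fun s hs => by
    simp only [f]
    rw [sqrt_eq_zero_of_nonpos (by nlinarith), zero_pow hn]
  have hint : Integrable fun t => f (|t| + c) := by
    refine Continuous.integrable_of_hasCompactSupport (by fun_prop)
      (HasCompactSupport.intro (isCompact_Icc (a := -(r - c)) (b := r - c)) fun t ht => hf _ ?_)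
    rw [Set.mem_Icc, ← abs_le, not_le] at ht
    linarith
  rw [closedBall_single_inter_closedBall_single_neg (hc.trans hcr) hc,
    ← integral_comp_abs_add hcr hf,
    ofReal_integral_eq_lintegral_ofReal hint (Filter.Eventually.of_forall fun t => by positivity)]
  exact volume_setOf_sum_sq_tail_le n hn (φ := fun t => r ^ 2 - (|t| + c) ^ 2) (by fun_prop)

theorem integral_sqrt_sq_sub_sq_pow (n : ℕ) {r u : ℝ} (hr : 0 ≤ r) (hu₀ : -1 ≤ u) (hu₁ : u ≤ 1) :
    ∫ s in (r * u)..r, √(r ^ 2 - s ^ 2) ^ n =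
      r ^ (n + 1) * ∫ θ in (0 : ℝ)..arccos u, sin θ ^ (n + 1) := by
  have hsubst := intervalIntegral.integral_deriv_smul_comp (a := 0) (b := arccos u)
    (fun θ _ => (hasDerivAt_cos θ).const_mul r) (by fun_prop)
    (show Continuous fun s => √(r ^ 2 - s ^ 2) ^ n by fun_prop)
  simp only [cos_zero, mul_one, cos_arccos hu₀ hu₁, Function.comp_apply, smul_eq_mul] at hsubst
  rw [intervalIntegral.integral_symm, ← hsubst, ← intervalIntegral.integral_neg,
    ← intervalIntegral.integral_const_mul]
  refine intervalIntegral.integral_congr fun θ hθ => ?_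
  rw [Set.uIcc_of_le (arccos_nonneg u)] at hθ
  have hsin : 0 ≤ sin θ := sin_nonneg_of_nonneg_of_le_pi hθ.1 (hθ.2.trans (arccos_le_pi u))
  have hpyth : r ^ 2 - (r * cos θ) ^ 2 = (r * sin θ) ^ 2 := by
    linear_combination -r ^ 2 * sin_sq_add_cos_sq θ
  rw [hpyth, sqrt_sq (by positivity)]
  ring

theorem stmt_0 (d : ℕ) (hd : 2 ≤ d) (r u : ℝ) (hr : 0 < r) (hu0 : 0 ≤ u) (hu1 : u ≤ 1)
    (x y : EuclideanSpace ℝ (Fin d)) (hxy : dist x y = 2 * r * u) :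
    (volume (closedBall x r ∩ closedBall y r)).toReal =
      2 * (volume (ball (0 : EuclideanSpace ℝ (Fin (d - 1))) 1)).toReal * r ^ d *
        ∫ θ in (0:ℝ)..Real.arccos u, Real.sin θ ^ d := by
  obtain ⟨n, rfl⟩ : ∃ n, d = n + 1 := ⟨d - 1, by omega⟩
  have hc : 0 ≤ r * u := by positivity
  have hcr : r * u ≤ r := mul_le_of_le_one_right hr.le hu1
  have hdist : dist x y = dist (EuclideanSpace.single 0 (r * u) : EuclideanSpace ℝ (Fin (n + 1)))
      (EuclideanSpace.single 0 (-(r * u))) := by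
    rw [hxy, PiLp.dist_single_same, Real.dist_eq, sub_neg_eq_add, abs_of_nonneg (by positivity)]
    ring
  have hI : 0 ≤ ∫ s in (r * u)..r, √(r ^ 2 - s ^ 2) ^ n :=
    intervalIntegral.integral_nonneg hcr fun s _ => by positivity
  rw [volume_closedBall_inter_closedBall_congr_dist hdist,
    volume_closedBall_single_inter_closedBall_single_neg n (by omega) hc hcr, ENNReal.toReal_mul,
    ENNReal.toReal_ofReal (by positivity), integral_sqrt_sq_sub_sq_pow n hr.le (by linarith) hu1,
    Nat.add_sub_cancel]
  ring
end

section
/- In ℝ², if four points are pairwise at distance at least 2r and the four closed balls of radius R centred at them have a common point, then R ≥ √2·r; moreover, for the vertices of a square of side 2r this bound is attained at the centre. -/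
/-!
Put the common point `p` at the origin, i.e. look at `vᵢ = xᵢ - p`. If `R < √2 r`, then
`‖vᵢ - vⱼ‖² ≥ 4r² > 2R² ≥ ‖vᵢ‖² + ‖vⱼ‖²`, so the four vectors have pairwise negative inner
products. But in `ℝⁿ` at most `n + 1` vectors can do so: if `∑ gᵢ vᵢ = 0`, splitting the
coefficients into positive and negative parts gives a vector `u = ∑ gᵢ⁺ vᵢ = ∑ gᵢ⁻ vᵢ` with
`⟪u, u⟫ ≤ 0`, and pairing `u = 0` with any further vector `w` of the family forces `g⁺ = 0`;
hence all but one of the vectors are linearly independent.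
-/
open Metric
open scoped RealInnerProductSpace

section
variable {E : Type*} [NormedAddCommGroup E] [InnerProductSpace ℝ E]

theorem inner_sum_smul_sum_smul_nonpos {ι : Type*} [Fintype ι] {v : ι → E}
    (hv : Pairwise fun i j => ⟪v i, v j⟫ < 0) {c d : ι → ℝ} (hc : 0 ≤ c) (hd : 0 ≤ d)
    (hcd : ∀ i, c i * d i = 0) :
    ⟪∑ i, c i • v i, ∑ j, d j • v j⟫ ≤ 0 := by
  simp only [sum_inner, inner_sum, real_inner_smul_left, real_inner_smul_right]
  refine Finset.sum_nonpos fun i _ => Finset.sum_nonpos fun j _ => ?_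
  rcases eq_or_ne i j with rfl | hij
  · rw [← mul_assoc, mul_comm (d i), hcd, zero_mul]
  · exact mul_nonpos_of_nonneg_of_nonpos (hd i)
      (mul_nonpos_of_nonneg_of_nonpos (hc j) (hv hij.symm).le)

theorem nonpos_of_sum_smul_eq_zero_of_pairwise_inner_neg {ι : Type*} [Fintype ι] {v : ι → E}
    {w : E} (hv : Pairwise fun i j => ⟪v i, v j⟫ < 0) (hw : ∀ i, ⟪v i, w⟫ < 0) {g : ι → ℝ}
    (hg : ∑ i, g i • v i = 0) : g ≤ 0 := by
  set c : ι → ℝ := fun i => max (g i) 0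
  set d : ι → ℝ := fun i => max (-g i) 0
  have hcd : ∑ i, c i • v i = ∑ j, d j • v j := by
    rw [← sub_eq_zero, ← Finset.sum_sub_distrib, ← hg]
    refine Finset.sum_congr rfl fun i _ => ?_
    rw [← sub_smul, max_zero_sub_max_neg_zero_eq_self]
  have hu : ∑ i, c i • v i = 0 := by
    refine inner_self_eq_zero.mp (le_antisymm ?_ real_inner_self_nonneg)
    conv_lhs => arg 3; rw [hcd]
    exact inner_sum_smul_sum_smul_nonpos hv (fun i => le_max_right _ _)
      (fun i => le_max_right _ _) fun i => by simpa [c, d] using le_total (g i) 0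
  have hterms : ∑ i, c i * ⟪v i, w⟫ = 0 := by
    simpa [sum_inner, real_inner_smul_left] using congrArg (⟪·, w⟫) hu
  intro i
  have hci := (Finset.sum_eq_zero_iff_of_nonpos fun i _ =>
    mul_nonpos_of_nonneg_of_nonpos (le_max_right _ _) (hw i).le).mp hterms i (Finset.mem_univ i)
  exact max_eq_right_iff.mp ((mul_eq_zero.mp hci).resolve_right (hw i).ne)

theorem linearIndependent_of_pairwise_inner_neg {ι : Type*} [Fintype ι] {v : ι → E} {w : E}
    (hv : Pairwise fun i j => ⟪v i, v j⟫ < 0) (hw : ∀ i, ⟪v i, w⟫ < 0) :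
    LinearIndependent ℝ v := by
  refine Fintype.linearIndependent_iff.mpr fun g hg => ?_
  have hneg : ∑ i, (-g) i • v i = 0 := by simp [neg_smul, Finset.sum_neg_distrib, hg]
  have h₁ := nonpos_of_sum_smul_eq_zero_of_pairwise_inner_neg hv hw hg
  have h₂ := nonpos_of_sum_smul_eq_zero_of_pairwise_inner_neg hv hw hneg
  exact fun i => le_antisymm (h₁ i) (neg_nonpos.mp (h₂ i))

theorem card_le_finrank_add_one_of_pairwise_inner_neg [FiniteDimensional ℝ E] {ι : Type*}
    [Fintype ι] {v : ι → E} (hv : Pairwise fun i j => ⟪v i, v j⟫ < 0) :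
    Fintype.card ι ≤ Module.finrank ℝ E + 1 := by
  classical
  rcases isEmpty_or_nonempty ι with hι | ⟨⟨j⟩⟩
  · simp
  · have := (linearIndependent_of_pairwise_inner_neg (v := fun i : {i // i ≠ j} => v i)
      (fun i k hik => hv (Subtype.coe_injective.ne hik)) fun i => hv i.2).fintype_card_le_finrank
    rw [Fintype.card_subtype_compl, Fintype.card_subtype_eq] at this
    omega

theorem real_inner_neg_of_norm_le_of_two_mul_le_norm_sub {u v : E} {r R : ℝ} (hu : ‖u‖ ≤ R)
    (hv : ‖v‖ ≤ R) (huv : 2 * r ≤ ‖u - v‖) (hR : R < √2 * r) : ⟪u, v⟫ < 0 := by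
  have hR₀ : 0 ≤ R := (norm_nonneg u).trans hu
  have hr : 0 ≤ r := (pos_of_mul_pos_right (hR₀.trans_lt hR) (Real.sqrt_nonneg 2)).le
  have hR2 : R ^ 2 < 2 * r ^ 2 :=
    calc R ^ 2 < (√2 * r) ^ 2 := pow_lt_pow_left₀ hR hR₀ two_ne_zero
      _ = 2 * r ^ 2 := by rw [mul_pow, Real.sq_sqrt zero_le_two]
  have huv2 : (2 * r) ^ 2 ≤ ‖u - v‖ ^ 2 := pow_le_pow_left₀ (by positivity) huv 2
  have hu2 : ‖u‖ ^ 2 ≤ R ^ 2 := pow_le_pow_left₀ (norm_nonneg u) hu 2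
  have hv2 : ‖v‖ ^ 2 ≤ R ^ 2 := pow_le_pow_left₀ (norm_nonneg v) hv 2
  linarith [norm_sub_sq_real u v]
end

theorem EuclideanSpace.dist_toLp_two (a b c d : ℝ) :
    dist !₂[a, b] !₂[c, d] = √((a - c) ^ 2 + (b - d) ^ 2) := by
  simp [EuclideanSpace.dist_eq, Fin.sum_univ_two, Real.dist_eq, sq_abs]

noncomputable def squareVertices (r : ℝ) : Fin 4 → EuclideanSpace ℝ (Fin 2) :=
  ![!₂[0, 0], !₂[2 * r, 0], !₂[2 * r, 2 * r], !₂[0, 2 * r]]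

theorem stmt_6_general (r R : ℝ) (hr : 0 < r) :
    (∀ x : Fin 4 → EuclideanSpace ℝ (Fin 2),
        (∀ i j, i ≠ j → 2 * r ≤ dist (x i) (x j)) →
        ∀ p, (∀ i, p ∈ closedBall (x i) R) → Real.sqrt 2 * r ≤ R) ∧
      (∃ y : Fin 4 → EuclideanSpace ℝ (Fin 2),
        dist (y 0) (y 1) = 2 * r ∧ dist (y 1) (y 2) = 2 * r ∧
        dist (y 2) (y 3) = 2 * r ∧ dist (y 3) (y 0) = 2 * r ∧
        dist (y 0) (y 2) = 2 * Real.sqrt 2 * r ∧ dist (y 1) (y 3) = 2 * Real.sqrt 2 * r ∧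
        ∃ c, ∀ i, dist c (y i) = Real.sqrt 2 * r) := by
  refine ⟨fun x hx p hp => ?_, squareVertices r, ?_, ?_, ?_, ?_, ?_, ?_, !₂[r, r], fun i => ?_⟩
  · by_contra! hR
    have hneg : Pairwise fun i j => ⟪x i - p, x j - p⟫ < 0 := fun i j hij =>
      real_inner_neg_of_norm_le_of_two_mul_le_norm_sub
        (dist_eq_norm (x i) p ▸ mem_closedBall'.mp (hp i))
        (dist_eq_norm (x j) p ▸ mem_closedBall'.mp (hp j))
        (by simpa [dist_eq_norm] using hx i j hij) hR
    simpa using card_le_finrank_add_one_of_pairwise_inner_neg hneg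
  on_goal 7 => fin_cases i
  all_goals
    simp only [squareVertices, Fin.reduceFinMk, Matrix.cons_val, EuclideanSpace.dist_toLp_two]
    rw [Real.sqrt_eq_iff_eq_sq (by positivity) (by positivity)]
    simp only [mul_pow, Real.sq_sqrt zero_le_two]
    ring

theorem stmt_6 (r R : ℝ) (hr : 0 < r) (hR : 0 < R) :
    (∀ x : Fin 4 → EuclideanSpace ℝ (Fin 2),
        (∀ i j, i ≠ j → 2 * r ≤ dist (x i) (x j)) →
        ∀ p, (∀ i, p ∈ closedBall (x i) R) → Real.sqrt 2 * r ≤ R) ∧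
      (∃ y : Fin 4 → EuclideanSpace ℝ (Fin 2),
        dist (y 0) (y 1) = 2 * r ∧ dist (y 1) (y 2) = 2 * r ∧
        dist (y 2) (y 3) = 2 * r ∧ dist (y 3) (y 0) = 2 * r ∧
        dist (y 0) (y 2) = 2 * Real.sqrt 2 * r ∧ dist (y 1) (y 3) = 2 * Real.sqrt 2 * r ∧
        ∃ c, ∀ i, dist c (y i) = Real.sqrt 2 * r) :=
  stmt_6_general r R hr
end

section
/- In ℝ^d with d ≥ 3, if four points are pairwise at distance at least 2r and the four closed balls of radius R centred at them have a common point, then R ≥ √(3/2)·r; moreover, for the vertices of a regular tetrahedron of side-length 2r this bound is attained at the centroid. -/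
/-!
For points `x₁, …, xₙ` and any `p` in a real inner product space,
`∑ᵢ ∑ⱼ ‖xᵢ - xⱼ‖² = 2n ∑ᵢ ‖xᵢ - p‖² - 2‖∑ᵢ (xᵢ - p)‖²`. If the points are pairwise at distance
at least `δ` and lie within `R` of `p`, this gives `n(n - 1)δ² ≤ 2n²R²`; for `n = 4`, `δ = 2r` it
reads `R² ≥ 3r²/2`. Equality holds for four alternate vertices of a cube of side `√2 r`, seen
from the centre of the cube.
-/

open Metric

section InnerProductSpace

variable {E : Type*} [NormedAddCommGroup E] [InnerProductSpace ℝ E]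

theorem sum_sum_norm_sub_sq {ι : Type*} [Fintype ι] (x : ι → E) :
    ∑ i, ∑ j, ‖x i - x j‖ ^ 2 = 2 * (Fintype.card ι * ∑ i, ‖x i‖ ^ 2 - ‖∑ i, x i‖ ^ 2) := by
  have hcross : ∑ i, ∑ j, inner ℝ (x i) (x j) = ‖∑ i, x i‖ ^ 2 := by
    rw [← real_inner_self_eq_norm_sq, sum_inner]
    simp only [inner_sum]
  simp only [norm_sub_sq_real, Finset.sum_add_distrib, Finset.sum_sub_distrib,
    ← Finset.mul_sum, hcross, Finset.sum_const, Finset.card_univ, nsmul_eq_mul]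
  ring

theorem card_sub_one_mul_sq_le_of_pairwise_le_dist {ι : Type*} [Fintype ι] {x : ι → E} {p : E}
    {δ R : ℝ} (hδ : 0 ≤ δ) (hx : Pairwise fun i j => δ ≤ dist (x i) (x j))
    (hR : ∀ i, x i ∈ closedBall p R) :
    (Fintype.card ι - 1) * δ ^ 2 ≤ 2 * Fintype.card ι * R ^ 2 := by
  classical
  set n : ℝ := (Fintype.card ι : ℝ)
  have hn : 0 ≤ n := Nat.cast_nonneg _
  set y : ι → E := fun i => x i - p
  have hpair (i j : ι) : δ ^ 2 - (if i = j then δ ^ 2 else 0) ≤ ‖y i - y j‖ ^ 2 := by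
    by_cases hij : i = j
    · simp [hij]
    · rw [if_neg hij, sub_zero, sub_sub_sub_cancel_right, ← dist_eq_norm]
      exact pow_le_pow_left₀ hδ (hx hij) 2
  have hball (i : ι) : ‖y i‖ ^ 2 ≤ R ^ 2 :=
    pow_le_pow_left₀ (norm_nonneg _) (mem_closedBall_iff_norm.1 (hR i)) 2
  have hsum : n * ((n - 1) * δ ^ 2) ≤ n * (2 * n * R ^ 2) := calc
    n * ((n - 1) * δ ^ 2) = ∑ i : ι, ∑ j : ι, (δ ^ 2 - if i = j then δ ^ 2 else 0) := by
      simp only [Finset.sum_sub_distrib, Finset.sum_ite_eq, Finset.mem_univ, if_true,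
        Finset.sum_const, Finset.card_univ, nsmul_eq_mul, n]
      ring
    _ ≤ ∑ i, ∑ j, ‖y i - y j‖ ^ 2 :=
      Finset.sum_le_sum fun i _ => Finset.sum_le_sum fun j _ => hpair i j
    _ = 2 * (n * ∑ i, ‖y i‖ ^ 2 - ‖∑ i, y i‖ ^ 2) := sum_sum_norm_sub_sq y
    _ ≤ 2 * (n * ∑ _i : ι, R ^ 2) := by
      gcongr
      exact (sub_le_self _ (sq_nonneg _)).trans
        (mul_le_mul_of_nonneg_left (Finset.sum_le_sum fun i _ => hball i) hn)
    _ = n * (2 * n * R ^ 2) := by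
      simp only [Finset.sum_const, Finset.card_univ, nsmul_eq_mul, n]
      ring
  rcases hn.eq_or_lt with hn0 | hn0
  · rw [← hn0]
    linarith [sq_nonneg δ, sq_nonneg R]
  · exact le_of_mul_le_mul_left hsum hn0

theorem Orthonormal.norm_sum_smul_sq {ι : Type*} [Fintype ι] {v : ι → E} (hv : Orthonormal ℝ v)
    (c : ι → ℝ) : ‖∑ i, c i • v i‖ ^ 2 = ∑ i, c i ^ 2 := by
  rw [← real_inner_self_eq_norm_sq, hv.inner_sum]
  simp only [conj_trivial, sq]

/-- Four alternate vertices of the cube `[-1, 1]³`; their centroid is the origin. -/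
def tetrahedronSigns : Fin 4 → Fin 3 → ℝ :=
  ![![1, 1, 1], ![1, -1, -1], ![-1, 1, -1], ![-1, -1, 1]]

def regularTetrahedron (v : Fin 3 → E) (i : Fin 4) : E :=
  ∑ k, tetrahedronSigns i k • v k

variable {v : Fin 3 → E}

theorem Orthonormal.dist_regularTetrahedron (hv : Orthonormal ℝ v) {i j : Fin 4} (hij : i ≠ j) :
    dist (regularTetrahedron v i) (regularTetrahedron v j) = 2 * √2 := by
  have hsq : dist (regularTetrahedron v i) (regularTetrahedron v j) ^ 2 = (2 * √2) ^ 2 := by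
    rw [dist_eq_norm, regularTetrahedron, regularTetrahedron, ← Finset.sum_sub_distrib]
    simp only [← sub_smul]
    rw [hv.norm_sum_smul_sq, mul_pow, Real.sq_sqrt zero_le_two, Fin.sum_univ_three]
    fin_cases i <;> fin_cases j <;> first
      | exact absurd rfl hij
      | norm_num [tetrahedronSigns, Matrix.cons_val_two, Matrix.tail_cons, Matrix.head_cons]
  exact (pow_left_inj₀ dist_nonneg (by positivity) two_ne_zero).1 hsq

theorem Orthonormal.norm_regularTetrahedron (hv : Orthonormal ℝ v) (i : Fin 4) :
    ‖regularTetrahedron v i‖ = √3 := by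
  rw [← Real.sqrt_sq (norm_nonneg _), regularTetrahedron, hv.norm_sum_smul_sq, Fin.sum_univ_three]
  fin_cases i <;>
    norm_num [tetrahedronSigns, Matrix.cons_val_two, Matrix.tail_cons, Matrix.head_cons]

end InnerProductSpace

theorem stmt_7_general (d : ℕ) (hd : 3 ≤ d) (r R : ℝ) (hr : 0 < r) :
    (∀ x : Fin 4 → EuclideanSpace ℝ (Fin d),
        (∀ i j, i ≠ j → 2 * r ≤ dist (x i) (x j)) →
        ∀ p, (∀ i, p ∈ closedBall (x i) R) → Real.sqrt (3 / 2) * r ≤ R) ∧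
      (∃ y : Fin 4 → EuclideanSpace ℝ (Fin d),
        (∀ i j, i ≠ j → dist (y i) (y j) = 2 * r) ∧
        ∃ c, ∀ i, dist c (y i) = Real.sqrt (3 / 2) * r) := by
  constructor
  · intro x hx p hp
    have hsq := card_sub_one_mul_sq_le_of_pairwise_le_dist (by positivity)
      (fun i j hij => hx i j hij) (fun i => mem_closedBall_comm.1 (hp i))
    rw [Fintype.card_fin] at hsq
    calc √(3 / 2) * r = √(3 / 2 * r ^ 2) := by
          rw [Real.sqrt_mul' _ (sq_nonneg r), Real.sqrt_sq hr.le]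
      _ ≤ √(R ^ 2) := Real.sqrt_le_sqrt (by push_cast at hsq; linarith)
      _ = R := Real.sqrt_sq (dist_nonneg.trans (hp 0))
  · obtain ⟨v, hv⟩ : ∃ v : Fin 3 → EuclideanSpace ℝ (Fin d), Orthonormal ℝ v :=
      ⟨_, EuclideanSpace.orthonormal_single.comp _ (Fin.castLE_injective hd)⟩
    have hs : ‖r / √2‖ = r / √2 := Real.norm_of_nonneg (by positivity)
    refine ⟨fun i => (r / √2) • regularTetrahedron v i, fun i j hij => ?_, 0, fun i => ?_⟩
    · rw [dist_smul₀, hs, hv.dist_regularTetrahedron hij]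
      field_simp
    · rw [dist_zero_left, norm_smul, hs, hv.norm_regularTetrahedron, Real.sqrt_div' _ zero_le_two]
      ring

theorem stmt_7 (d : ℕ) (hd : 3 ≤ d) (r R : ℝ) (hr : 0 < r) (hR : 0 < R) :
    (∀ x : Fin 4 → EuclideanSpace ℝ (Fin d),
        (∀ i j, i ≠ j → 2 * r ≤ dist (x i) (x j)) →
        ∀ p, (∀ i, p ∈ closedBall (x i) R) → Real.sqrt (3 / 2) * r ≤ R) ∧
      (∃ y : Fin 4 → EuclideanSpace ℝ (Fin d),
        (∀ i j, i ≠ j → dist (y i) (y j) = 2 * r) ∧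
        ∃ c, ∀ i, dist c (y i) = Real.sqrt (3 / 2) * r) :=
  stmt_7_general d hd r R hr
end

section
/- Let E be a finite measure space with measure λ, E: X → ℝ a measurable function bounded below with essential infimum E* = inf over the support, and suppose λ({x : E(x) ≤ E* + η}) > 0 for every η > 0. Define the Gibbs measures μ_z(A) = (∫_A e^{−zE} dλ)/(∫ e^{−zE} dλ). Then for all ε, η > 0 there exists z* such that for all z > z*, μ_z({x : E(x) ≤ E* + η}) ≥ 1 − ε. -/
/-!
On `{E ≤ E* + η/2}`, a set of positive measure `c`, the weight `e^{-zE}` is at least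
`e^{-z(E* + η/2)}`, so the partition function is at least `c e^{-z(E* + η/2)}`; off
`{E ≤ E* + η}` the weight is below `e^{-z(E* + η)}`. Hence the Gibbs mass of the complement
is at most `e^{-zη/2} λ(X) / c`, which tends to `0` as `z → ∞`.
-/

open MeasureTheory Filter Topology Real

lemma setIntegral_div_integral_eq_one_sub_compl {X : Type*} [MeasurableSpace X] {μ : Measure X}
    {f : X → ℝ} {s : Set X} (hs : MeasurableSet s) (hf : Integrable f μ) (h : ∫ x, f x ∂μ ≠ 0) :
    (∫ x in s, f x ∂μ) / ∫ x, f x ∂μ = 1 - (∫ x in sᶜ, f x ∂μ) / ∫ x, f x ∂μ := by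
  rw [eq_sub_iff_add_eq, ← add_div, integral_add_compl hs hf, div_self h]

section Gibbs

variable {X : Type*} [MeasurableSpace X] {μ : Measure X} [IsFiniteMeasure μ] {E : X → ℝ}
  {m z : ℝ}

lemma integrable_exp_neg_mul (hE : Measurable E) (hm : ∀ᵐ x ∂μ, m ≤ E x) (hz : 0 ≤ z) :
    Integrable (fun x => exp (-(z * E x))) μ := by
  refine (integrable_const (exp (-(z * m)))).mono'
    (hE.const_mul z).neg.exp.aestronglyMeasurable ?_
  filter_upwards [hm] with x hx
  rw [norm_of_nonneg (exp_pos _).le, exp_le_exp, neg_le_neg_iff]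
  exact mul_le_mul_of_nonneg_left hx hz

lemma exp_neg_mul_mul_measureReal_le_integral (hE : Measurable E) (hm : ∀ᵐ x ∂μ, m ≤ E x)
    (hz : 0 ≤ z) (a : ℝ) :
    exp (-(z * a)) * μ.real {x | E x ≤ a} ≤ ∫ x, exp (-(z * E x)) ∂μ := by
  have hint := integrable_exp_neg_mul hE hm hz
  calc exp (-(z * a)) * μ.real {x | E x ≤ a}
      ≤ ∫ x in {x | E x ≤ a}, exp (-(z * E x)) ∂μ := by
        rw [mul_comm, ← smul_eq_mul]
        refine setIntegral_ge_of_const_le (hE measurableSet_Iic) (measure_ne_top _ _)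
          (fun x hx => ?_) hint.integrableOn
        rw [exp_le_exp, neg_le_neg_iff]
        exact mul_le_mul_of_nonneg_left hx hz
    _ ≤ ∫ x, exp (-(z * E x)) ∂μ :=
        setIntegral_le_integral hint (Eventually.of_forall fun x => (exp_pos _).le)

lemma setIntegral_exp_neg_mul_compl_le (hz : 0 ≤ z) (b : ℝ) :
    ∫ x in {x | E x ≤ b}ᶜ, exp (-(z * E x)) ∂μ ≤ exp (-(z * b)) * μ.real Set.univ := by
  calc ∫ x in {x | E x ≤ b}ᶜ, exp (-(z * E x)) ∂μ
      ≤ ‖∫ x in {x | E x ≤ b}ᶜ, exp (-(z * E x)) ∂μ‖ := le_norm_self _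
    _ ≤ exp (-(z * b)) * μ.real {x | E x ≤ b}ᶜ :=
        norm_setIntegral_le_of_norm_le_const (measure_lt_top _ _) fun x hx => by
          rw [norm_of_nonneg (exp_pos _).le, exp_le_exp, neg_le_neg_iff]
          exact mul_le_mul_of_nonneg_left (le_of_lt (not_le.mp hx)) hz
    _ ≤ exp (-(z * b)) * μ.real Set.univ :=
        mul_le_mul_of_nonneg_left (measureReal_mono (Set.subset_univ _)) (exp_pos _).le

lemma integral_exp_neg_mul_pos (hE : Measurable E) (hm : ∀ᵐ x ∂μ, m ≤ E x) (hz : 0 ≤ z)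
    {a : ℝ} (ha : 0 < μ {x | E x ≤ a}) : 0 < ∫ x, exp (-(z * E x)) ∂μ := by
  have ha' : 0 < μ.real {x | E x ≤ a} := ENNReal.toReal_pos ha.ne' (measure_ne_top _ _)
  exact (by positivity : (0 : ℝ) < _).trans_le (exp_neg_mul_mul_measureReal_le_integral hE hm hz a)

lemma setIntegral_exp_neg_mul_compl_div_integral_le (hE : Measurable E)
    (hm : ∀ᵐ x ∂μ, m ≤ E x) (hz : 0 ≤ z) {a : ℝ} (ha : 0 < μ {x | E x ≤ a}) (b : ℝ) :
    (∫ x in {x | E x ≤ b}ᶜ, exp (-(z * E x)) ∂μ) / ∫ x, exp (-(z * E x)) ∂μ ≤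
      exp (-(z * (b - a))) * (μ.real Set.univ / μ.real {x | E x ≤ a}) := by
  have ha' : 0 < μ.real {x | E x ≤ a} := ENNReal.toReal_pos ha.ne' (measure_ne_top _ _)
  rw [div_le_iff₀ (integral_exp_neg_mul_pos hE hm hz ha)]
  calc ∫ x in {x | E x ≤ b}ᶜ, exp (-(z * E x)) ∂μ
      ≤ exp (-(z * b)) * μ.real Set.univ := setIntegral_exp_neg_mul_compl_le hz b
    _ = exp (-(z * (b - a))) * (μ.real Set.univ / μ.real {x | E x ≤ a}) *
          (exp (-(z * a)) * μ.real {x | E x ≤ a}) := by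
        rw [show -(z * b) = -(z * (b - a)) + -(z * a) by ring, exp_add]
        field_simp
    _ ≤ _ := by gcongr; exact exp_neg_mul_mul_measureReal_le_integral hE hm hz a

lemma tendsto_setIntegral_exp_neg_mul_compl_div_integral (hE : Measurable E)
    (hm : ∀ᵐ x ∂μ, m ≤ E x) {a b : ℝ} (hab : a < b) (ha : 0 < μ {x | E x ≤ a}) :
    Tendsto (fun z => (∫ x in {x | E x ≤ b}ᶜ, exp (-(z * E x)) ∂μ) / ∫ x, exp (-(z * E x)) ∂μ)
      atTop (𝓝 0) := by
  have hbound : Tendsto (fun z => exp (-(z * (b - a))) * (μ.real Set.univ / μ.real {x | E x ≤ a}))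
      atTop (𝓝 0) := by
    simpa using (tendsto_exp_neg_atTop_nhds_zero.comp
      (tendsto_id.atTop_mul_const (sub_pos.mpr hab))).mul_const
        (μ.real Set.univ / μ.real {x | E x ≤ a})
  refine tendsto_of_tendsto_of_tendsto_of_le_of_le' tendsto_const_nhds hbound ?_ ?_
  · exact Eventually.of_forall fun z => div_nonneg (integral_nonneg fun x => (exp_pos _).le)
      (integral_nonneg fun x => (exp_pos _).le)
  · filter_upwards [eventually_ge_atTop 0] with z hz
    exact setIntegral_exp_neg_mul_compl_div_integral_le hE hm hz ha b

end Gibbs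

theorem stmt_15_general {X : Type*} [MeasurableSpace X] (lam : Measure X) [IsFiniteMeasure lam]
    (E : X → ℝ) (hE : Measurable E) (Estar : ℝ)
    (hlower : ∀ᵐ x ∂lam, Estar ≤ E x)
    (hpos : ∀ η : ℝ, 0 < η → 0 < lam {x | E x ≤ Estar + η}) :
    ∀ ε : ℝ, 0 < ε → ∀ η : ℝ, 0 < η → ∃ zstar : ℝ, 0 < zstar ∧ ∀ z : ℝ, zstar < z →
      1 - ε ≤ (∫ x in {x | E x ≤ Estar + η}, Real.exp (-(z * E x)) ∂lam) /
        (∫ x, Real.exp (-(z * E x)) ∂lam) := by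
  intro ε hε η hη
  have hhalf : 0 < lam {x | E x ≤ Estar + η / 2} := hpos (η / 2) (half_pos hη)
  obtain ⟨N, hN⟩ := eventually_atTop.mp <|
    (tendsto_setIntegral_exp_neg_mul_compl_div_integral hE hlower
      (by linarith : Estar + η / 2 < Estar + η) hhalf).eventually (ge_mem_nhds hε)
  refine ⟨max N 1, by positivity, fun z hz => ?_⟩
  have hz0 : 0 ≤ z := by linarith [le_max_right N 1]
  rw [setIntegral_div_integral_eq_one_sub_compl (measurableSet_le hE measurable_const)
    (integrable_exp_neg_mul hE hlower hz0) (integral_exp_neg_mul_pos hE hlower hz0 hhalf).ne']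
  linarith [hN z (le_of_max_le_left hz.le)]

theorem stmt_15 {X : Type*} [MeasurableSpace X] (lam : Measure X) [IsFiniteMeasure lam]
    (hlam : lam ≠ 0) (E : X → ℝ) (hE : Measurable E) (Estar : ℝ)
    (hlower : ∀ᵐ x ∂lam, Estar ≤ E x)
    (hpos : ∀ η : ℝ, 0 < η → 0 < lam {x | E x ≤ Estar + η}) :
    ∀ ε : ℝ, 0 < ε → ∀ η : ℝ, 0 < η → ∃ zstar : ℝ, 0 < zstar ∧ ∀ z : ℝ, zstar < z →
      1 - ε ≤ (∫ x in {x | E x ≤ Estar + η}, Real.exp (-(z * E x)) ∂lam) /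
        (∫ x, Real.exp (-(z * E x)) ∂lam) :=
  stmt_15_general lam E hE Estar hlower hpos
end

section
/- Let W be a standard d-dimensional Brownian motion on [0,1]. For every ε > 0 and δ ∈ (0,1], the probability that the δ-modulus of continuity of W on [0,1] exceeds ε is at most 4√5·(d/δ)·exp(−ε²/(10d·δ)). -/
open MeasureTheory ProbabilityTheory Set

/-- A standard `d`-dimensional Brownian motion on `[0,∞)` under the probability
measure `P`: it starts at `0`, has a.s. continuous paths, and its increments over
disjoint time intervals have independent coordinates, each coordinate increment
being a centred Gaussian with variance equal to the length of the time interval. -/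
def IsStdBrownianMotion (d : ℕ) {Ω : Type*} [MeasurableSpace Ω] (P : Measure Ω)
    (X : ℝ → Ω → EuclideanSpace ℝ (Fin d)) : Prop :=
  (∀ᵐ ω ∂P, X 0 ω = 0) ∧
  (∀ᵐ ω ∂P, Continuous fun t => X t ω) ∧
  (∀ t : ℝ, Measurable (X t)) ∧
  (∀ s t : ℝ, 0 ≤ s → s ≤ t → ∀ i : Fin d,
    Measure.map (fun ω => X t ω i - X s ω i) P = gaussianReal 0 (Real.toNNReal (t - s))) ∧
  (∀ N : ℕ, ∀ t : Fin (N + 1) → ℝ, Monotone t → (∀ k, 0 ≤ t k) →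
    iIndepFun
      (fun p : Fin N × Fin d => fun ω =>
        X (t p.1.succ) ω p.2 - X (t p.1.castSucc) ω p.2) P)

/-!
Cover `[0, 1]` by blocks `[a, a + 5δ/4]` whose starts are `δ/4` apart (the last one ending at
`1`), so that any two times less than `δ` apart lie in a common block; there are at most `4/δ`
blocks. If `|W t - W s| > ε` for two such times, then by the triangle inequality through `W a`
and by comparing the Euclidean norm with the largest coordinate, `|Wᵢ u - Wᵢ a| > α := ε / (2√d)`
for some coordinate `i` and some `u` in the block. By continuity of paths it suffices to look at
dyadic times, and on a finite grid Lévy's maximal inequality (the discrete reflection principle)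
bounds the probability of this by twice the Gaussian tail on each side, i.e. by
`2 exp(-α² / (2 · 5δ/4)) = 2 exp(-ε² / (10 d δ))`. Summing over the blocks and coordinates gives
`(8d/δ) exp(-ε² / (10 d δ))`, and `8 ≤ 4√5`.
-/

open scoped NNReal ENNReal
open Function

/-- The cap `max (1 - L) 0` makes the last block end at `1` without starting before `0`. -/
noncomputable def blockStart (h L : ℝ) (k : ℕ) : ℝ := min (k * h) (max (1 - L) 0)

noncomputable def blockCount (h L : ℝ) : ℕ := ⌊max (1 - L) 0 / h⌋₊ + 2

lemma blockStart_nonneg {h : ℝ} (hh : 0 ≤ h) (L : ℝ) (k : ℕ) : 0 ≤ blockStart h L k :=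
  le_min (by positivity) (le_max_right _ _)

lemma blockCount_mul_le {h : ℝ} (hh : 0 < h) (L : ℝ) :
    blockCount h L * h ≤ max (1 - L) 0 + 2 * h := by
  have := (le_div_iff₀ hh).1 (Nat.floor_le (div_nonneg (le_max_right (1 - L) 0) hh.le))
  simp only [blockCount]
  push_cast
  linarith

lemma blockCount_mul_le_four {δ : ℝ} (hδ0 : 0 < δ) (hδ1 : δ ≤ 1) :
    blockCount (δ / 4) (5 * δ / 4) * δ ≤ 4 := by
  have := blockCount_mul_le (by positivity : 0 < δ / 4) (5 * δ / 4)
  rcases max_cases (1 - 5 * δ / 4) 0 with ⟨h, _⟩ | ⟨h, _⟩ <;> rw [h] at this <;> linarith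

lemma exists_mem_blockStart {h L δ s t : ℝ} (hh : 0 < h) (hδL : h + δ ≤ L) (hs : s ∈ Icc 0 1)
    (ht : t ∈ Icc 0 1) (hst : |t - s| < δ) :
    ∃ k < blockCount h L, s ∈ Icc (blockStart h L k) (blockStart h L k + L) ∧
      t ∈ Icc (blockStart h L k) (blockStart h L k + L) := by
  suffices ∃ k < blockCount h L, blockStart h L k ≤ min s t ∧ max s t ≤ blockStart h L k + L by
    obtain ⟨k, hk, hlo, hhi⟩ := this
    exact ⟨k, hk, ⟨hlo.trans (min_le_left _ _), (le_max_left _ _).trans hhi⟩,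
      ⟨hlo.trans (min_le_right _ _), (le_max_right _ _).trans hhi⟩⟩
  have hspan : max s t - min s t < δ := by rwa [max_sub_min_eq_abs', abs_sub_comm]
  simp only [blockCount, blockStart]
  set c := max (1 - L) 0
  by_cases hsc : min s t < c
  · set k := ⌊min s t / h⌋₊
    have hk_le : (k : ℝ) * h ≤ min s t :=
      (le_div_iff₀ hh).1 (Nat.floor_le (div_nonneg (le_min hs.1 ht.1) hh.le))
    have hk_gt : min s t < (k + 1) * h := (div_lt_iff₀ hh).1 (Nat.lt_floor_add_one _)
    have hstart : min (k * h) c = k * h := min_eq_left (by linarith)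
    refine ⟨k, ?_, by rw [hstart]; exact hk_le, by rw [hstart]; linarith⟩
    have : k ≤ ⌊c / h⌋₊ := Nat.floor_le_floor (div_le_div_of_nonneg_right hsc.le hh.le)
    omega
  · push Not at hsc
    have hstart : min (((⌊c / h⌋₊ + 1 : ℕ) : ℝ) * h) c = c := by
      refine min_eq_right ?_
      push_cast
      exact ((div_lt_iff₀ hh).1 (Nat.lt_floor_add_one _)).le
    refine ⟨⌊c / h⌋₊ + 1, by omega, by rw [hstart]; exact hsc, ?_⟩
    rw [hstart]
    linarith [le_max_left (1 - L) 0, max_le hs.2 ht.2]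

lemma EuclideanSpace.exists_lt_abs_sub_of_lt_dist {ι : Type*} [Fintype ι]
    {x y : EuclideanSpace ℝ ι} {r : ℝ} (hr : 0 ≤ r) (h : √(Fintype.card ι) * r < dist x y) :
    ∃ i, r < |x i - y i| := by
  by_contra! hle
  refine h.not_ge ?_
  calc dist x y = √(∑ i, dist (x i) (y i) ^ 2) := EuclideanSpace.dist_eq x y
    _ ≤ √(∑ _i : ι, r ^ 2) := by
        gcongr with i
        rw [Real.dist_eq]
        exact hle i
    _ = √(Fintype.card ι) * r := by
        rw [Finset.sum_const, Finset.card_univ, nsmul_eq_mul, Real.sqrt_mul (Nat.cast_nonneg _),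
          Real.sqrt_sq hr]

lemma exists_mem_Icc_lt_abs_sub {ι : Type*} [Fintype ι] {f : ℝ → EuclideanSpace ℝ ι}
    {a L s t r : ℝ} (hs : s ∈ Icc a (a + L)) (ht : t ∈ Icc a (a + L)) (hr : 0 ≤ r)
    (h : 2 * (√(Fintype.card ι) * r) < dist (f s) (f t)) :
    ∃ u ∈ Icc a (a + L), ∃ i, r < |f u i - f a i| := by
  have htri := dist_triangle_right (f s) (f t) (f a)
  by_cases hsa : √(Fintype.card ι) * r < dist (f s) (f a)
  · exact ⟨s, hs, EuclideanSpace.exists_lt_abs_sub_of_lt_dist hr hsa⟩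
  · exact ⟨t, ht, EuclideanSpace.exists_lt_abs_sub_of_lt_dist hr (by linarith)⟩

lemma modulus_event_subset_biUnion_block {ι Ω : Type*} [Fintype ι]
    (X : ℝ → Ω → EuclideanSpace ℝ ι) {h L δ r ε : ℝ} (hh : 0 < h) (hδL : h + δ ≤ L) (hr : 0 ≤ r)
    (hε : 2 * (√(Fintype.card ι) * r) = ε) :
    {ω | ∃ s ∈ Icc (0 : ℝ) 1, ∃ t ∈ Icc (0 : ℝ) 1, |t - s| < δ ∧ ε < dist (X s ω) (X t ω)} ⊆
      ⋃ k ∈ Finset.range (blockCount h L), ⋃ i, {ω | ∃ u ∈ Icc (blockStart h L k)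
        (blockStart h L k + L), r < |X u ω i - X (blockStart h L k) ω i|} := by
  rintro ω ⟨s, hs, t, ht, hst, hdist⟩
  obtain ⟨k, hk, hsk, htk⟩ := exists_mem_blockStart hh hδL hs ht hst
  obtain ⟨u, hu, i, hi⟩ :=
    exists_mem_Icc_lt_abs_sub (f := fun u => X u ω) hsk htk hr (hε.trans_lt hdist)
  exact mem_biUnion (Finset.mem_range.2 hk) (mem_iUnion.2 ⟨i, u, hu, hi⟩)

lemma exists_dyadic_mem_of_isOpen {U : Set ℝ} (hU : IsOpen U) {a L u : ℝ} (hL : 0 < L)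
    (hu : u ∈ Icc a (a + L)) (huU : u ∈ U) :
    ∃ m j : ℕ, j ≤ 2 ^ m ∧ a + j * (L / 2 ^ m) ∈ U := by
  obtain ⟨η, hη, hball⟩ := Metric.isOpen_iff.1 hU u huU
  obtain ⟨m, hm⟩ := exists_pow_lt_of_lt_one (div_pos hη hL) one_half_lt_one
  have hh : 0 < L / 2 ^ m := by positivity
  have hhη : L / 2 ^ m < η := by
    rw [div_eq_mul_one_div, ← one_div_pow]
    calc L * (1 / 2) ^ m < L * (η / L) := by gcongr
      _ = η := mul_div_cancel₀ η hL.ne'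
  have hfloor := Nat.floor_le (div_nonneg (sub_nonneg.2 hu.1) hh.le)
  have hfloor' := Nat.lt_floor_add_one ((u - a) / (L / 2 ^ m))
  refine ⟨m, ⌊(u - a) / (L / 2 ^ m)⌋₊, Nat.floor_le_of_le ?_, hball ?_⟩
  · rw [div_le_iff₀ hh, Nat.cast_pow, Nat.cast_ofNat, mul_div_cancel₀ _ (by positivity)]
    linarith [hu.2]
  · rw [le_div_iff₀ hh] at hfloor
    rw [div_lt_iff₀ hh] at hfloor'
    rw [Metric.mem_ball, Real.dist_eq, abs_lt]
    constructor <;> nlinarith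

namespace ProbabilityTheory

lemma gaussianReal_zero_preimage_neg (v : ℝ≥0) {s : Set ℝ} (hs : MeasurableSet s) :
    gaussianReal 0 v (Neg.neg ⁻¹' s) = gaussianReal 0 v s := by
  rw [← Measure.map_apply measurable_neg hs, gaussianReal_map_neg, neg_zero]

lemma gaussianReal_Ici_zero {v : ℝ≥0} (hv : v ≠ 0) : gaussianReal 0 v (Ici 0) = 2⁻¹ := by
  have := nullSingletonClass_gaussianReal (μ := 0) hv
  have hsymm : gaussianReal 0 v (Iio 0) = gaussianReal 0 v (Ici 0) := by
    rw [← measure_congr (Ioi_ae_eq_Ici (μ := gaussianReal 0 v)),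
      ← gaussianReal_zero_preimage_neg v measurableSet_Ioi]
    congr 1
    ext x
    simp
  have htotal : gaussianReal 0 v (Iio 0) + gaussianReal 0 v (Ici 0) = 1 := by
    rw [← compl_Iio, measure_add_measure_compl measurableSet_Iio, measure_univ]
  rw [hsymm, ← two_mul, mul_comm] at htotal
  exact ENNReal.eq_inv_of_mul_eq_one_left htotal

lemma one_le_two_mul_gaussianReal_Ici_zero (v : ℝ≥0) : 1 ≤ 2 * gaussianReal 0 v (Ici 0) := by
  rcases eq_or_ne v 0 with rfl | hv
  · simp
  · rw [gaussianReal_Ici_zero hv, ENNReal.mul_inv_cancel] <;> simp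

/-- Comparing the density with that of `N(α, v)` on `[α, ∞)` gains the factor `1/2` over the
Chernoff bound. -/
lemma gaussianReal_Ici_le {v : ℝ≥0} {α L : ℝ} (hα : 0 < α) (hvL : v ≤ L) :
    gaussianReal 0 v (Ici α) ≤ ENNReal.ofReal (Real.exp (-α ^ 2 / (2 * L)) / 2) := by
  rcases eq_or_ne v 0 with rfl | hv
  · simp [hα.not_ge]
  have hv0 : (0 : ℝ) < v := by positivity
  have hdensity : ∀ x ∈ Ici α, gaussianPDF 0 v x
      ≤ ENNReal.ofReal (Real.exp (-α ^ 2 / (2 * v))) * gaussianPDF α v x := by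
    intro x hx
    rw [gaussianPDF, gaussianPDF, ← ENNReal.ofReal_mul (Real.exp_nonneg _)]
    refine ENNReal.ofReal_le_ofReal ?_
    rw [gaussianPDFReal, gaussianPDFReal, mul_left_comm, ← Real.exp_add]
    gcongr
    rw [← add_div, div_le_div_iff_of_pos_right (by positivity)]
    nlinarith [mul_nonneg hα.le (sub_nonneg.2 (mem_Ici.1 hx))]
  have hhalf : gaussianReal α v (Ici α) = 2⁻¹ := by
    rw [← gaussianReal_Ici_zero hv, ← zero_add α, ← gaussianReal_map_add_const,
      Measure.map_apply (measurable_add_const _) measurableSet_Ici]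
    congr 1
    ext x
    simp
  calc gaussianReal 0 v (Ici α)
      ≤ ∫⁻ x in Ici α, ENNReal.ofReal (Real.exp (-α ^ 2 / (2 * v))) * gaussianPDF α v x := by
        rw [gaussianReal_apply 0 hv]
        exact setLIntegral_mono (by fun_prop) hdensity
    _ = ENNReal.ofReal (Real.exp (-α ^ 2 / (2 * v))) / 2 := by
        rw [lintegral_const_mul _ (measurable_gaussianPDF _ _), ← gaussianReal_apply α hv, hhalf]
        exact (div_eq_mul_inv _ _).symm
    _ ≤ ENNReal.ofReal (Real.exp (-α ^ 2 / (2 * L)) / 2) := by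
        rw [ENNReal.ofReal_div_of_pos two_pos, ENNReal.ofReal_ofNat]
        gcongr ENNReal.ofReal (Real.exp ?_) / _
        rw [neg_div, neg_div, neg_le_neg_iff]
        exact div_le_div_of_nonneg_left (sq_nonneg α) (by positivity) (by linarith)

end ProbabilityTheory

def firstHit {Ω : Type*} (S : ℕ → Ω → ℝ) (α : ℝ) (k : ℕ) : Set Ω :=
  {ω | α ≤ S k ω ∧ ∀ m < k, S m ω < α}

lemma pairwise_disjoint_firstHit {Ω : Type*} (S : ℕ → Ω → ℝ) (α : ℝ) :
    Pairwise (Disjoint on firstHit S α) :=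
  pairwise_disjoint_on _ |>.2 fun k _ hkl =>
    disjoint_left.2 fun _ hk hl => (hl.2 k hkl).not_ge hk.1

lemma biUnion_firstHit {Ω : Type*} (S : ℕ → Ω → ℝ) (α : ℝ) (N : ℕ) :
    ⋃ k ∈ Finset.range (N + 1), firstHit S α k = {ω | ∃ k ≤ N, α ≤ S k ω} := by
  ext ω
  simp only [firstHit, mem_iUnion, mem_ofPred, Finset.mem_range]
  constructor
  · rintro ⟨k, hk, hSk, -⟩
    exact ⟨k, by omega, hSk⟩
  · rintro ⟨k, hk, hSk⟩
    have hex : ∃ m, α ≤ S m ω := ⟨k, hSk⟩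
    exact ⟨Nat.find hex, by grind [Nat.find_min' hex hSk], Nat.find_spec hex,
      fun m hm => not_le.1 (Nat.find_min hex hm)⟩

lemma measurableSet_firstHit {Ω : Type*} {m : MeasurableSpace Ω} {S : ℕ → Ω → ℝ} {k : ℕ}
    (hS : ∀ j ≤ k, Measurable (S j)) (α : ℝ) : MeasurableSet (firstHit S α k) := by
  have hset : firstHit S α k = {ω | α ≤ S k ω} ∩ ⋂ j < k, {ω | S j ω < α} := by
    ext ω
    simp [firstHit]
  rw [hset]
  exact (measurableSet_le measurable_const (hS k le_rfl)).inter <|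
    .iInter fun j => .iInter fun hj => measurableSet_lt (hS j hj.le) measurable_const

lemma measurable_sum_iSup_comap {Ω : Type*} {N : ℕ} {D : ℕ → Ω → ℝ} {s : Finset ℕ}
    {I : Set (Fin N)} (hsI : ∀ j ∈ s, ∃ h : j < N, (⟨j, h⟩ : Fin N) ∈ I) :
    Measurable[⨆ j ∈ I, MeasurableSpace.comap (D j) inferInstance] fun ω => ∑ j ∈ s, D j ω := by
  refine Finset.measurable_sum s fun j hj => ?_
  obtain ⟨hjN, hjI⟩ := hsI j hj
  exact measurable_iff_comap_le.2 (le_iSup₂ (f := fun (i : Fin N) (_ : i ∈ I) =>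
    MeasurableSpace.comap (D i) inferInstance) ⟨j, hjN⟩ hjI)

section Levy

variable {Ω : Type*} [MeasurableSpace Ω] {P : Measure Ω}

lemma ProbabilityTheory.iIndepFun.measure_inter_sum_range_le_eq_mul {D : ℕ → Ω → ℝ} {N k : ℕ}
    (hind : iIndepFun (fun j : Fin N => D j) P) (hD : ∀ j, Measurable (D j)) (hk : k ≤ N)
    {A : Set Ω} (hA : MeasurableSet[⨆ j ∈ {j : Fin N | (j : ℕ) < k},
      MeasurableSpace.comap (D j) inferInstance] A) :
    P (A ∩ {ω | ∑ j ∈ Finset.range k, D j ω ≤ ∑ j ∈ Finset.range N, D j ω}) =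
      P A * P {ω | ∑ j ∈ Finset.range k, D j ω ≤ ∑ j ∈ Finset.range N, D j ω} := by
  have hindep := indep_iSup_of_disjoint (fun j : Fin N => (hD j).comap_le)
    ((iIndepFun_iff_iIndep (fun _ => inferInstance) (fun j : Fin N => D j) P).1 hind)
    (S := {j : Fin N | (j : ℕ) < k}) (T := {j : Fin N | k ≤ (j : ℕ)})
    (disjoint_left.2 fun j hj hj' => (not_le.2 (mem_ofPred.1 hj)) (mem_ofPred.1 hj'))
  have hset : {ω | ∑ j ∈ Finset.range k, D j ω ≤ ∑ j ∈ Finset.range N, D j ω} =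
      {ω | 0 ≤ ∑ j ∈ Finset.Ico k N, D j ω} := by
    ext ω
    simp only [mem_ofPred, Finset.sum_Ico_eq_sub _ hk, sub_nonneg]
  rw [hset]
  refine (Indep_iff _ _ P).1 hindep _ _ hA <|
    measurableSet_le measurable_const (measurable_sum_iSup_comap fun j hj => ?_)
  have := Finset.mem_Ico.1 hj
  exact ⟨this.2, this.1⟩

theorem levy_maximal_ineq {D : ℕ → Ω → ℝ} {N : ℕ} (hD : ∀ j, Measurable (D j))
    (hind : iIndepFun (fun j : Fin N => D j) P)
    (hmedian : ∀ k ≤ N,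
      1 ≤ 2 * P {ω | ∑ j ∈ Finset.range k, D j ω ≤ ∑ j ∈ Finset.range N, D j ω})
    (α : ℝ) :
    P {ω | ∃ k ≤ N, α ≤ ∑ j ∈ Finset.range k, D j ω} ≤
      2 * P {ω | α ≤ ∑ j ∈ Finset.range N, D j ω} := by
  set S : ℕ → Ω → ℝ := fun k ω => ∑ j ∈ Finset.range k, D j ω
  set B : ℕ → Set Ω := fun k => {ω | S k ω ≤ S N ω}
  have hSmeas : ∀ k, Measurable (S k) := fun k => Finset.measurable_sum _ fun j _ => hD j
  have hAmeas : ∀ k, MeasurableSet (firstHit S α k) := fun k =>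
    measurableSet_firstHit (fun j _ => hSmeas j) α
  have hBmeas : ∀ k, MeasurableSet (B k) := fun k => measurableSet_le (hSmeas k) (hSmeas N)
  have hmul : ∀ k ≤ N, P (firstHit S α k ∩ B k) = P (firstHit S α k) * P (B k) :=
    fun k hk => hind.measure_inter_sum_range_le_eq_mul hD hk <|
      measurableSet_firstHit (fun j hj => measurable_sum_iSup_comap fun i hi => by
        have := Finset.mem_range.1 hi
        exact ⟨by omega, show i < k by omega⟩) α
  have hdisj : Pairwise (Disjoint on fun k => firstHit S α k ∩ B k) :=
    (pairwise_disjoint_firstHit S α).mono fun k l h => h.mono inter_subset_left inter_subset_left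
  calc P {ω | ∃ k ≤ N, α ≤ S k ω}
      = ∑ k ∈ Finset.range (N + 1), P (firstHit S α k) := by
        rw [← biUnion_firstHit, measure_biUnion_finset
          ((pairwise_disjoint_firstHit S α).set_pairwise _) fun k _ => hAmeas k]
    _ ≤ ∑ k ∈ Finset.range (N + 1), 2 * P (firstHit S α k ∩ B k) := by
        refine Finset.sum_le_sum fun k hk => ?_
        have hkN : k ≤ N := Nat.lt_succ_iff.1 (Finset.mem_range.1 hk)
        rw [hmul k hkN, mul_left_comm]
        exact le_mul_of_one_le_right zero_le (hmedian k hkN)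
    _ = 2 * P (⋃ k ∈ Finset.range (N + 1), firstHit S α k ∩ B k) := by
        rw [← Finset.mul_sum, measure_biUnion_finset (hdisj.set_pairwise _)
          fun k _ => (hAmeas k).inter (hBmeas k)]
    _ ≤ 2 * P {ω | α ≤ S N ω} :=
        mul_le_mul_right (measure_mono (iUnion₂_subset fun k _ ω hω =>
          show α ≤ S N ω from le_trans hω.1.1 hω.2)) 2

end Levy

namespace IsStdBrownianMotion

variable {d : ℕ} {Ω : Type*} [MeasurableSpace Ω] {P : Measure Ω}
  {X : ℝ → Ω → EuclideanSpace ℝ (Fin d)}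

lemma measurable_apply (hX : IsStdBrownianMotion d P X) (t : ℝ) (i : Fin d) :
    Measurable fun ω => X t ω i :=
  (measurable_pi_apply i).comp ((WithLp.measurable_ofLp _ _).comp (hX.2.2.1 t))

lemma measurable_sub (hX : IsStdBrownianMotion d P X) (s t : ℝ) (i : Fin d) :
    Measurable fun ω => X t ω i - X s ω i :=
  (hX.measurable_apply t i).sub (hX.measurable_apply s i)

lemma neg (hX : IsStdBrownianMotion d P X) : IsStdBrownianMotion d P fun t ω => -X t ω := by
  refine ⟨?_, ?_, fun t => (hX.2.2.1 t).neg, fun s t hs hst i => ?_, fun N t ht ht0 => ?_⟩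
  · filter_upwards [hX.1] with ω hω
    simp [hω]
  · filter_upwards [hX.2.1] with ω hω
    exact hω.neg
  · have := congrArg (Measure.map Neg.neg) (hX.2.2.2.1 s t hs hst i)
    rw [Measure.map_map measurable_neg (hX.measurable_sub s t i), gaussianReal_map_neg,
      neg_zero] at this
    convert this using 2
    ext ω
    simp only [PiLp.neg_apply, Function.comp_apply]
    ring
  · convert (hX.2.2.2.2 N t ht ht0).comp (fun _ x => -x) fun _ => measurable_neg using 2 with p
    ext ω
    simp only [PiLp.neg_apply, Function.comp_apply]
    ring

lemma iIndepFun_sub (hX : IsStdBrownianMotion d P X) {τ : ℕ → ℝ} (hτ : Monotone τ)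
    (hτ0 : 0 ≤ τ 0) (N : ℕ) (i : Fin d) :
    iIndepFun (fun j : Fin N => fun ω => X (τ (j + 1)) ω i - X (τ j) ω i) P :=
  (hX.2.2.2.2 N (fun k => τ k) (fun _ _ h => hτ h) fun k => hτ0.trans (hτ k.val.zero_le)).precomp
    (g := fun j => (j, i)) fun _ _ h => (Prod.ext_iff.1 h).1

lemma measure_sub_mem (hX : IsStdBrownianMotion d P X) {s t : ℝ} (hs : 0 ≤ s) (hst : s ≤ t)
    (i : Fin d) {A : Set ℝ} (hA : MeasurableSet A) :
    P {ω | X t ω i - X s ω i ∈ A} = gaussianReal 0 (t - s).toNNReal A := by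
  rw [← hX.2.2.2.1 s t hs hst i,
    Measure.map_apply (hX.measurable_sub s t i) hA]
  rfl

lemma measure_exists_le_sub_le [IsProbabilityMeasure P] (hX : IsStdBrownianMotion d P X)
    (i : Fin d) {τ : ℕ → ℝ} (hτ : Monotone τ) (hτ0 : 0 ≤ τ 0) (N : ℕ) {α L : ℝ} (hα : 0 < α)
    (hL : τ N - τ 0 ≤ L) :
    P {ω | ∃ k ≤ N, α ≤ X (τ k) ω i - X (τ 0) ω i} ≤
      ENNReal.ofReal (Real.exp (-α ^ 2 / (2 * L))) := by
  set D : ℕ → Ω → ℝ := fun j ω => X (τ (j + 1)) ω i - X (τ j) ω i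
  have hsum : ∀ k ω, ∑ j ∈ Finset.range k, D j ω = X (τ k) ω i - X (τ 0) ω i :=
    fun k ω => Finset.sum_range_sub (fun j => X (τ j) ω i) k
  have hmedian : ∀ k ≤ N,
      1 ≤ 2 * P {ω | ∑ j ∈ Finset.range k, D j ω ≤ ∑ j ∈ Finset.range N, D j ω} := by
    intro k hk
    have hset : {ω | ∑ j ∈ Finset.range k, D j ω ≤ ∑ j ∈ Finset.range N, D j ω} =
        {ω | X (τ N) ω i - X (τ k) ω i ∈ Ici 0} := by
      ext ω
      simp [hsum]
    rw [hset, hX.measure_sub_mem (hτ0.trans (hτ k.zero_le)) (hτ hk) i measurableSet_Ici]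
    exact one_le_two_mul_gaussianReal_Ici_zero _
  have htail : P {ω | α ≤ ∑ j ∈ Finset.range N, D j ω} ≤
      ENNReal.ofReal (Real.exp (-α ^ 2 / (2 * L)) / 2) := by
    have hset : {ω | α ≤ ∑ j ∈ Finset.range N, D j ω} =
        {ω | X (τ N) ω i - X (τ 0) ω i ∈ Ici α} := by
      ext ω
      simp [hsum]
    rw [hset, hX.measure_sub_mem hτ0 (hτ N.zero_le) i measurableSet_Ici]
    refine gaussianReal_Ici_le hα ?_
    rw [Real.coe_toNNReal']
    exact max_le hL ((sub_nonneg.2 (hτ N.zero_le)).trans hL)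
  calc P {ω | ∃ k ≤ N, α ≤ X (τ k) ω i - X (τ 0) ω i}
      = P {ω | ∃ k ≤ N, α ≤ ∑ j ∈ Finset.range k, D j ω} := by simp only [hsum]
    _ ≤ 2 * P {ω | α ≤ ∑ j ∈ Finset.range N, D j ω} :=
        levy_maximal_ineq (fun j => hX.measurable_sub _ _ i) (hX.iIndepFun_sub hτ hτ0 N i)
          hmedian α
    _ ≤ 2 * ENNReal.ofReal (Real.exp (-α ^ 2 / (2 * L)) / 2) := by gcongr
    _ = ENNReal.ofReal (Real.exp (-α ^ 2 / (2 * L))) := by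
        rw [ENNReal.ofReal_div_of_pos two_pos, ENNReal.ofReal_ofNat,
          ENNReal.mul_div_cancel two_ne_zero ENNReal.ofNat_ne_top]

lemma measure_exists_le_abs_sub_le [IsProbabilityMeasure P] (hX : IsStdBrownianMotion d P X)
    (i : Fin d) {τ : ℕ → ℝ} (hτ : Monotone τ) (hτ0 : 0 ≤ τ 0) (N : ℕ) {α L : ℝ} (hα : 0 < α)
    (hL : τ N - τ 0 ≤ L) :
    P {ω | ∃ k ≤ N, α ≤ |X (τ k) ω i - X (τ 0) ω i|} ≤
      ENNReal.ofReal (2 * Real.exp (-α ^ 2 / (2 * L))) := by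
  have hsub : {ω | ∃ k ≤ N, α ≤ |X (τ k) ω i - X (τ 0) ω i|} ⊆
      {ω | ∃ k ≤ N, α ≤ X (τ k) ω i - X (τ 0) ω i} ∪
        {ω | ∃ k ≤ N, α ≤ (-X (τ k) ω) i - (-X (τ 0) ω) i} := by
    rintro ω ⟨k, hk, hle⟩
    rcases le_abs'.1 hle with h | h
    · exact Or.inr ⟨k, hk, by simp only [PiLp.neg_apply]; linarith⟩
    · exact Or.inl ⟨k, hk, h⟩
  calc _ ≤ _ := measure_mono hsub
    _ ≤ _ := measure_union_le _ _
    _ ≤ ENNReal.ofReal (Real.exp (-α ^ 2 / (2 * L))) +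
          ENNReal.ofReal (Real.exp (-α ^ 2 / (2 * L))) :=
        add_le_add (hX.measure_exists_le_sub_le i hτ hτ0 N hα hL)
          (hX.neg.measure_exists_le_sub_le i hτ hτ0 N hα hL)
    _ = ENNReal.ofReal (2 * Real.exp (-α ^ 2 / (2 * L))) := by
        rw [← ENNReal.ofReal_add (Real.exp_nonneg _) (Real.exp_nonneg _), ← two_mul]

lemma measure_exists_lt_abs_sub_le [IsProbabilityMeasure P] (hX : IsStdBrownianMotion d P X)
    (i : Fin d) {a L α : ℝ} (ha : 0 ≤ a) (hL : 0 < L) (hα : 0 < α) :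
    P {ω | ∃ u ∈ Icc a (a + L), α < |X u ω i - X a ω i|} ≤
      ENNReal.ofReal (2 * Real.exp (-α ^ 2 / (2 * L))) := by
  set τ : ℕ → ℕ → ℝ := fun m j => a + j * (L / 2 ^ m) with hτ
  set E : ℕ → Set Ω := fun m => {ω | ∃ j ≤ 2 ^ m, α ≤ |X (τ m j) ω i - X (τ m 0) ω i|}
  have hτ0 : ∀ m, τ m 0 = a := by simp [hτ]
  have hτmono : ∀ m, Monotone (τ m) := fun m j k hjk => by
    simp only [hτ]
    gcongr
  have hE : Monotone E := by
    refine monotone_nat_of_le_succ fun m ω ⟨j, hj, hle⟩ => ⟨2 * j, by rw [pow_succ]; omega, ?_⟩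
    have hrefine : τ (m + 1) (2 * j) = τ m j := by
      simp only [hτ, pow_succ]
      push_cast
      field_simp
    rwa [hrefine, hτ0, ← hτ0 m]
  have hsub : {ω | ∃ u ∈ Icc a (a + L), α < |X u ω i - X a ω i|} ≤ᵐ[P] ⋃ m, E m := by
    filter_upwards [hX.2.1] with ω hω ⟨u, hu, hlt⟩
    have hopen : IsOpen {u | α < |X u ω i - X a ω i|} :=
      isOpen_lt continuous_const
        (((PiLp.continuous_apply 2 _ i).comp hω).sub continuous_const).abs
    obtain ⟨m, j, hj, hmem⟩ := exists_dyadic_mem_of_isOpen hopen hL hu hlt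
    exact mem_iUnion.2 ⟨m, j, hj, by rw [hτ0]; exact le_of_lt hmem⟩
  calc _ ≤ P (⋃ m, E m) := measure_mono_ae hsub
    _ = ⨆ m, P (E m) := hE.measure_iUnion
    _ ≤ _ := iSup_le fun m => hX.measure_exists_le_abs_sub_le i (hτmono m) (by rw [hτ0]; exact ha)
        (2 ^ m) hα (le_of_eq (by simp only [hτ]; push_cast; field_simp; ring))

end IsStdBrownianMotion

theorem stmt_18 {Ω : Type*} [MeasurableSpace Ω] (P : Measure Ω) [IsProbabilityMeasure P]
    (d : ℕ) (hd : 0 < d) (X : ℝ → Ω → EuclideanSpace ℝ (Fin d))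
    (hX : IsStdBrownianMotion d P X) (ε δ : ℝ) (hε : 0 < ε) (hδ0 : 0 < δ) (hδ1 : δ ≤ 1) :
    P {ω | ∃ s ∈ Icc (0 : ℝ) 1, ∃ t ∈ Icc (0 : ℝ) 1,
        |t - s| < δ ∧ ε < dist (X s ω) (X t ω)} ≤
      ENNReal.ofReal (4 * Real.sqrt 5 * ((d : ℝ) / δ) *
        Real.exp (-(ε ^ 2 / (10 * (d : ℝ) * δ)))) := by
  set L := 5 * δ / 4 with hL
  set α := ε / (2 * √(d : ℝ)) with hα_def
  set a := blockStart (δ / 4) L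
  set n := blockCount (δ / 4) L
  have hsqrt : 0 < √(d : ℝ) := Real.sqrt_pos.2 (Nat.cast_pos.2 hd)
  have hα : 0 < α := by positivity
  have hε_eq : 2 * (√(Fintype.card (Fin d)) * α) = ε := by
    rw [Fintype.card_fin, hα_def]
    field_simp
  have hexp : -α ^ 2 / (2 * L) = -(ε ^ 2 / (10 * d * δ)) := by
    rw [hα_def, hL, div_pow, mul_pow, Real.sq_sqrt (Nat.cast_nonneg d)]
    field_simp
    ring
  have hcount : (n : ℝ) ≤ 4 / δ :=
    (le_div_iff₀ hδ0).2 (blockCount_mul_le_four hδ0 hδ1)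
  calc _ ≤ ∑ k ∈ Finset.range n, ∑ i : Fin d,
        P {ω | ∃ u ∈ Icc (a k) (a k + L), α < |X u ω i - X (a k) ω i|} :=
        (measure_mono (modulus_event_subset_biUnion_block X (by positivity)
          (by rw [hL]; linarith) hα.le hε_eq)).trans <| (measure_biUnion_finset_le _ _).trans <|
          Finset.sum_le_sum fun k _ => measure_iUnion_fintype_le _ _
    _ ≤ ∑ k ∈ Finset.range n, ∑ i : Fin d, ENNReal.ofReal (2 * Real.exp (-α ^ 2 / (2 * L))) := by
        gcongr with k _ i
        exact hX.measure_exists_lt_abs_sub_le i (blockStart_nonneg (by positivity) _ _)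
          (by positivity) hα
    _ = ENNReal.ofReal (n * (d * (2 * Real.exp (-α ^ 2 / (2 * L))))) := by
        simp [ENNReal.ofReal_mul]
    _ ≤ _ := by
        refine ENNReal.ofReal_le_ofReal ?_
        rw [hexp]
        have h5 : 2 ≤ √5 := Real.le_sqrt_of_sq_le (by norm_num)
        calc _ ≤ 4 / δ * (d * (2 * Real.exp (-(ε ^ 2 / (10 * d * δ))))) := by gcongr
          _ = 4 * 2 * (d / δ) * Real.exp (-(ε ^ 2 / (10 * d * δ))) := by ring
          _ ≤ 4 * √5 * (d / δ) * Real.exp (-(ε ^ 2 / (10 * d * δ))) := by gcongr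
end
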